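/- arXiv:1611.09390 — 6 statements merged into one kernel-verified Lean document; each statement's English description precedes it below -/
import Mathlib

section
/- Let X be a Banach space and let C ⊆ X be a weakly compact, convex set having the Opial property. Suppose T : C → C is (α₁,α₂)-nonexpansive (for a multi-index (α₁,α₂) with α₁ > 0, α₂ > 0 and α₁ + α₂ = 1) and T is asymptotically regular at some x ∈ C. Then for every y in the weak ω-limit set ω_w(x) of the orbit (Tⁿx)ₙ, the limit limₙ ‖Tⁿx − y‖ exists. -/
open Filter Topology

/-- A sequence `u` converges weakly to `y` in a normed space. -/
def WeakConvSeq {X : Type*} [NormedAddCommGroup X] [NormedSpace ℝ X]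
    (u : ℕ → X) (y : X) : Prop :=
  ∀ f : X →L[ℝ] ℝ, Filter.Tendsto (fun n => f (u n)) Filter.atTop (nhds (f y))

/-- A subset `C` has the Opial property. -/
def OpialSet {X : Type*} [NormedAddCommGroup X] [NormedSpace ℝ X] (C : Set X) : Prop :=
  ∀ (u : ℕ → X) (u₀ : X), (∀ n, u n ∈ C) → WeakConvSeq u u₀ →
    ∀ v : X, v ≠ u₀ →
      Filter.liminf (fun n => ‖u n - u₀‖) Filter.atTop <
        Filter.liminf (fun n => ‖u n - v‖) Filter.atTop

/-- The weak ω-limit set of the orbit of `x` under `T`: all points of `C` which are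
weak limits of some subsequence of `(T^[n] x)ₙ`. -/
def omegaW {X : Type*} [NormedAddCommGroup X] [NormedSpace ℝ X]
    (T : X → X) (C : Set X) (x : X) : Set X :=
  {y | y ∈ C ∧ ∃ φ : ℕ → ℕ, StrictMono φ ∧ WeakConvSeq (fun k => T^[φ k] x) y}

/-!
A weakly convergent sequence is bounded by uniform boundedness, so the Opial property can be used with real-valued
`liminf`s. Along a subsequence `u` of the orbit converging weakly to `y`, asymptotic regularity
turns mean nonexpansiveness into `α₁ r(Ty) + α₂ r(T²y) ≤ r(y)` for `r(v) = liminf ‖u - v‖`, and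
Opial then forces `Ty = y`. Once `y` is fixed, `aₙ = ‖Tⁿx - y‖` satisfies
`α₁ aₙ₊₁ + α₂ aₙ₊₂ ≤ aₙ`, so `aₙ + α₂ aₙ₊₁` decreases to a limit; since `aₙ₊₁ - aₙ → 0`,
`aₙ` converges as well.
-/

open Bornology

theorem WeakConvSeq.isBounded_range {X : Type*} [NormedAddCommGroup X] [NormedSpace ℝ X]
    {u : ℕ → X} {y : X} (hu : WeakConvSeq u y) : IsBounded (Set.range u) := by
  obtain ⟨M, hM⟩ := banach_steinhaus (g := fun n => NormedSpace.inclusionInDoubleDual ℝ X (u n))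
    fun f => (isBounded_iff_forall_norm_le.1 (Metric.isBounded_range_of_tendsto _ (hu f))).imp
      fun _ hC n => hC _ ⟨n, rfl⟩
  refine isBounded_iff_forall_norm_le.2 ⟨M, ?_⟩
  rintro _ ⟨n, rfl⟩
  exact (NormedSpace.inclusionInDoubleDualLi ℝ (E := X)).norm_map (u n) ▸ hM n

theorem liminf_mul_add_mul_le_of_le_add {f g h e : ℕ → ℝ} {a b : ℝ} (ha : 0 ≤ a) (hb : 0 ≤ b)
    (hf : IsBounded (Set.range f)) (hg : IsBounded (Set.range g))
    (hh : IsBounded (Set.range h)) (he : Tendsto e atTop (𝓝 0))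
    (hle : ∀ n, a * f n + b * g n ≤ e n + h n) :
    a * liminf f atTop + b * liminf g atTop ≤ liminf h atTop := by
  have below {k : ℕ → ℝ} (hk : IsBounded (Set.range k)) : IsBoundedUnder (· ≥ ·) atTop k :=
    hk.bddBelow.isBoundedUnder_of_range
  have above {k : ℕ → ℝ} (hk : IsBounded (Set.range k)) : IsBoundedUnder (· ≤ ·) atTop k :=
    hk.bddAbove.isBoundedUnder_of_range
  have hmul (c : ℝ) {k : ℕ → ℝ} (hk : IsBounded (Set.range k)) :
      IsBounded (Set.range fun n => c * k n) :=
    (hk.smul₀ c).subset <| Set.range_subset_iff.2 fun n => Set.smul_mem_smul_set ⟨n, rfl⟩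
  have liminf_const_mul {c : ℝ} (hc : 0 ≤ c) {k : ℕ → ℝ} (hk : IsBounded (Set.range k)) :
      liminf (fun n => c * k n) atTop = c * liminf k atTop :=
    ((monotone_mul_left_of_nonneg hc).map_liminf_of_continuousAt k
      (continuous_const_mul c).continuousAt (above hk).isCoboundedUnder_ge (below hk)).symm
  calc a * liminf f atTop + b * liminf g atTop
      = liminf (fun n => a * f n) atTop + liminf (fun n => b * g n) atTop := by
        rw [liminf_const_mul ha hf, liminf_const_mul hb hg]
    _ ≤ liminf (fun n => a * f n + b * g n) atTop :=
        le_liminf_add (below (hmul a hf)) (above (hmul a hf)) (below (hmul b hg))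
          (above (hmul b hg)).isCoboundedUnder_ge
    _ ≤ liminf (e + h) atTop :=
        liminf_le_liminf (Eventually.of_forall hle)
          (isBoundedUnder_ge_add (below (hmul a hf)) (below (hmul b hg)))
          (isBoundedUnder_le_add he.isBoundedUnder_le (above hh)).isCoboundedUnder_ge
    _ ≤ limsup e atTop + liminf h atTop :=
        liminf_add_le he.isBoundedUnder_ge he.isBoundedUnder_le (below hh)
          (above hh).isCoboundedUnder_ge
    _ = liminf h atTop := by rw [he.limsup_eq, zero_add]

theorem OpialSet.liminf_norm_sub_le {X : Type*} [NormedAddCommGroup X] [NormedSpace ℝ X]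
    {C : Set X} (hC : OpialSet C) {u : ℕ → X} {y : X} (hu : ∀ n, u n ∈ C)
    (hw : WeakConvSeq u y) (v : X) :
    liminf (fun n => ‖u n - y‖) atTop ≤ liminf (fun n => ‖u n - v‖) atTop := by
  rcases eq_or_ne v y with rfl | hv
  · exact le_rfl
  · exact (hC u y hu hw v hv).le

theorem exists_tendsto_of_mul_add_mul_le {a : ℕ → ℝ} {α₁ α₂ : ℝ} (hα₂ : 0 ≤ α₂)
    (hα : α₁ + α₂ = 1) (ha : ∀ n, 0 ≤ a n) (hle : ∀ n, α₁ * a (n + 1) + α₂ * a (n + 2) ≤ a n)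
    (hd : Tendsto (fun n => a (n + 1) - a n) atTop (𝓝 0)) : ∃ L, Tendsto a atTop (𝓝 L) := by
  set c : ℕ → ℝ := fun n => a n + α₂ * a (n + 1)
  have hc_anti : Antitone c := antitone_nat_of_succ_le fun n => by
    show a (n + 1) + α₂ * a (n + 2) ≤ a n + α₂ * a (n + 1)
    linarith [eq_sub_of_add_eq hα ▸ hle n]
  have hc_bdd : BddBelow (Set.range c) :=
    ⟨0, Set.forall_mem_range.2 fun n => add_nonneg (ha n) (mul_nonneg hα₂ (ha (n + 1)))⟩
  have ha_eq : a = fun n => (c n - α₂ * (a (n + 1) - a n)) / (1 + α₂) := by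
    ext n
    field_simp
    ring
  refine ⟨((⨅ n, c n) - α₂ * 0) / (1 + α₂), ?_⟩
  rw [ha_eq]
  exact ((tendsto_atTop_ciInf hc_anti hc_bdd).sub (hd.const_mul α₂)).div_const _

theorem OpialSet.isFixedPt_of_weakConvSeq {X : Type*} [NormedAddCommGroup X] [NormedSpace ℝ X]
    {C : Set X} (hC : OpialSet C) {T : X → X} (hT : Set.MapsTo T C C) {α₁ α₂ : ℝ}
    (hα₁ : 0 < α₁) (hα₂ : 0 ≤ α₂) (hα : α₁ + α₂ = 1)
    (hne : ∀ x ∈ C, ∀ y ∈ C, α₁ * ‖T x - T y‖ + α₂ * ‖T (T x) - T (T y)‖ ≤ ‖x - y‖)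
    {u : ℕ → X} {y : X} (hu : ∀ n, u n ∈ C) (hy : y ∈ C) (hw : WeakConvSeq u y)
    (hreg : Tendsto (fun n => ‖u n - T (u n)‖) atTop (𝓝 0)) : Function.IsFixedPt T y := by
  set r : X → ℝ := fun v => liminf (fun n => ‖u n - v‖) atTop
  obtain ⟨M, hM⟩ := isBounded_iff_forall_norm_le.1 hw.isBounded_range
  have hbdd (v : X) : IsBounded (Set.range fun n => ‖u n - v‖) :=
    isBounded_iff_forall_norm_le.2 ⟨M + ‖v‖, Set.forall_mem_range.2 fun n => by
      rw [norm_norm]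
      exact (norm_sub_le _ _).trans (by gcongr; exact hM _ ⟨n, rfl⟩)⟩
  have hreg₁ : Tendsto (fun n => ‖T (u n) - T (T (u n))‖) atTop (𝓝 0) := by
    refine squeeze_zero (fun n => norm_nonneg _) (fun n => ?_) (by simpa using hreg.div_const α₁)
    rw [le_div_iff₀' hα₁]
    have := hne _ (hu n) _ (hT (hu n))
    nlinarith [mul_nonneg hα₂ (norm_nonneg (T (T (u n)) - T (T (T (u n)))))]
  have hreg₂ : Tendsto (fun n => ‖u n - T (T (u n))‖) atTop (𝓝 0) :=
    squeeze_zero (fun _ => norm_nonneg _) (fun n => norm_sub_le_norm_sub_add_norm_sub _ _ _)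
      (by simpa using hreg.add hreg₁)
  have hmean : α₁ * r (T y) + α₂ * r (T (T y)) ≤ r y := by
    refine liminf_mul_add_mul_le_of_le_add hα₁.le hα₂ (hbdd _) (hbdd _) (hbdd _)
      (by simpa using (hreg.const_mul α₁).add (hreg₂.const_mul α₂)) fun n => ?_
    have h₁ := norm_sub_le_norm_sub_add_norm_sub (u n) (T (u n)) (T y)
    have h₂ := norm_sub_le_norm_sub_add_norm_sub (u n) (T (T (u n))) (T (T y))
    linarith [hne _ (hu n) _ hy, mul_le_mul_of_nonneg_left h₁ hα₁.le,
      mul_le_mul_of_nonneg_left h₂ hα₂]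
  by_contra hTy
  have h₁ : r y < r (T y) := hC u y hu hw _ hTy
  have h₂ : r y ≤ r (T (T y)) := hC.liminf_norm_sub_le hu hw _
  have hry : r y = α₁ * r y + α₂ * r y := by rw [← add_mul, hα, one_mul]
  linarith [mul_lt_mul_of_pos_left h₁ hα₁, mul_le_mul_of_nonneg_left h₂ hα₂]

theorem norm_limit_exists_of_mean_nonexpansive_two_general
    {X : Type*} [NormedAddCommGroup X] [NormedSpace ℝ X]
    (C : Set X) (hC_opial : OpialSet C)
    (T : X → X) (hT : Set.MapsTo T C C)
    (α₁ α₂ : ℝ) (hα₁ : 0 < α₁) (hα₂ : 0 < α₂) (hα : α₁ + α₂ = 1)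
    (hne : ∀ x ∈ C, ∀ y ∈ C,
      α₁ * ‖T x - T y‖ + α₂ * ‖T (T x) - T (T y)‖ ≤ ‖x - y‖)
    (x : X) (hx : x ∈ C)
    (har : Filter.Tendsto (fun n => ‖T^[n] x - T^[n + 1] x‖) Filter.atTop (nhds 0)) :
    ∀ y ∈ omegaW T C x,
      ∃ L : ℝ, Filter.Tendsto (fun n => ‖T^[n] x - y‖) Filter.atTop (nhds L) := by
  rintro y ⟨hy, φ, hφ, hw⟩
  have horbit (n : ℕ) : T^[n] x ∈ C := hT.iterate n hx
  have hfix : T y = y := hC_opial.isFixedPt_of_weakConvSeq hT hα₁ hα₂.le hα hne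
    (fun k => horbit (φ k)) hy hw <| by
      simpa only [Function.comp_def, Function.iterate_succ_apply'] using
        har.comp hφ.tendsto_atTop
  refine exists_tendsto_of_mul_add_mul_le hα₂.le hα (fun n => norm_nonneg _) (fun n => ?_) ?_
  · simpa only [hfix, Function.iterate_succ_apply'] using hne _ (horbit n) y hy
  · refine squeeze_zero_norm (fun n => ?_) har
    rw [Real.norm_eq_abs, norm_sub_rev (T^[n] x) (T^[n + 1] x)]
    simpa using abs_norm_sub_norm_le (T^[n + 1] x - y) (T^[n] x - y)

theorem norm_limit_exists_of_mean_nonexpansive_two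
    {X : Type*} [NormedAddCommGroup X] [NormedSpace ℝ X] [CompleteSpace X]
    (C : Set X) (hC_wcompact : IsCompact (toWeakSpace ℝ X '' C))
    (hC_convex : Convex ℝ C) (hC_opial : OpialSet C)
    (T : X → X) (hT : Set.MapsTo T C C)
    (α₁ α₂ : ℝ) (hα₁ : 0 < α₁) (hα₂ : 0 < α₂) (hα : α₁ + α₂ = 1)
    (hne : ∀ x ∈ C, ∀ y ∈ C,
      α₁ * ‖T x - T y‖ + α₂ * ‖T (T x) - T (T y)‖ ≤ ‖x - y‖)
    (x : X) (hx : x ∈ C)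
    (har : Filter.Tendsto (fun n => ‖T^[n] x - T^[n + 1] x‖) Filter.atTop (nhds 0)) :
    ∀ y ∈ omegaW T C x,
      ∃ L : ℝ, Filter.Tendsto (fun n => ‖T^[n] x - y‖) Filter.atTop (nhds L) :=
  norm_limit_exists_of_mean_nonexpansive_two_general C hC_opial T hT α₁ α₂ hα₁ hα₂ hα hne x hx har
end

section
/- Let X be a Banach space and let C ⊆ X be a weakly compact, convex set having the Opial property. Suppose T : C → C is α-nonexpansive for some multi-index α = (α₁, …, α_{n₀}) (with α₁ > 0, α_{n₀} > 0, α_j ≥ 0 for all j, and α₁ + ⋯ + α_{n₀} = 1), and T is asymptotically regular at some point x ∈ C. Then the sequence of iterates (Tⁿx)ₙ converges weakly to a fixed point of T. -/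
/-!
The orbit `uₙ = Tⁿx` stays in `C`. Weak compactness gives weakly convergent subsequences: the
orbit spans a separable subspace `S`, countably many norming functionals separate the points of
`S`, so the weak topology on the weakly compact set `C ∩ S` is metrizable.

If `u_{φ k} ⇀ z`, asymptotic regularity makes `‖u_{φ k} - T^m u_{φ k}‖ → 0` for every `m`, so
with `ρ v = liminf ‖u_{φ k} - v‖` the mean nonexpansive inequality gives
`∑ αⱼ ρ(T^{j+1} z) ≤ ρ z`. By the Opial property `ρ z ≤ ρ v` for all `v`, hence
`ρ(T z) ≤ ρ z` since `α₁ > 0`, and the strict Opial inequality forces `T z = z`.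

For a fixed point `z`, the numbers `cₙ = ‖uₙ - z‖` satisfy `∑ αⱼ c_{n+j+1} ≤ cₙ`, so the
weighted window sums `∑ᵢ αᵢ ∑_{j ≤ i} c_{n+j}` are nonincreasing; by asymptotic regularity they
differ from a fixed multiple of `cₙ` by a vanishing amount, so `cₙ` converges. Two weak
subsequential limits `y ≠ z` would then contradict the Opial property twice, so all weak
subsequential limits agree and the whole orbit converges weakly.
-/

open Filter Topology

section WeakTopology

variable {X : Type*} [NormedAddCommGroup X] [NormedSpace ℝ X]

theorem continuous_apply_toWeakSpace_symm (f : StrongDual ℝ X) :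
    Continuous fun q : WeakSpace ℝ X => f ((toWeakSpace ℝ X).symm q) :=
  WeakBilin.eval_continuous (topDualPairing ℝ X).flip f

theorem weakConvSeq_of_tendsto_toWeakSpace {u : ℕ → X} {y : X}
    (h : Tendsto (fun n => toWeakSpace ℝ X (u n)) atTop (𝓝 (toWeakSpace ℝ X y))) :
    WeakConvSeq u y := fun f =>
  ((continuous_apply_toWeakSpace_symm f).tendsto _).comp h

theorem isBounded_of_isCompact_toWeakSpace {C : Set X}
    (hC : IsCompact (toWeakSpace ℝ X '' C)) : Bornology.IsBounded C := by
  have hpointwise : ∀ f : StrongDual ℝ X, ∃ M, ∀ i : C,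
      ‖NormedSpace.inclusionInDoubleDual ℝ X i f‖ ≤ M := fun f => by
    obtain ⟨M, hM⟩ := (hC.image (continuous_apply_toWeakSpace_symm f)).isBounded.exists_norm_le
    exact ⟨M, fun i => by simpa using hM _ ⟨_, ⟨i, i.2, rfl⟩, rfl⟩⟩
  obtain ⟨M, hM⟩ := banach_steinhaus hpointwise
  refine isBounded_iff_forall_norm_le.2 ⟨M, fun w hw => ?_⟩
  rw [← (NormedSpace.inclusionInDoubleDualLi (E := X) ℝ).norm_map w]
  exact hM ⟨w, hw⟩

theorem eq_zero_of_mem_closure_range_of_norming {ι : Type*} {d : ι → X} {g : ι → StrongDual ℝ X}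
    (hg_norm : ∀ i, ‖g i‖ ≤ 1) (hg_apply : ∀ i, g i (d i) = ‖d i‖) {y : X}
    (hy : y ∈ closure (Set.range d)) (hgy : ∀ i, g i y = 0) : y = 0 := by
  by_contra hne
  have hpos : 0 < ‖y‖ / 3 := by positivity
  obtain ⟨_, ⟨i, rfl⟩, hi⟩ := Metric.mem_closure_iff.1 hy _ hpos
  rw [dist_eq_norm] at hi
  have hdi : ‖d i‖ ≤ ‖y - d i‖ := by
    calc ‖d i‖ = g i (d i - y) := by rw [map_sub, hgy, sub_zero, hg_apply]
      _ ≤ ‖g i‖ * ‖d i - y‖ := (le_abs_self _).trans ((g i).le_opNorm _)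
      _ ≤ ‖y - d i‖ := by
        rw [norm_sub_rev]; exact mul_le_of_le_one_left (norm_nonneg _) (hg_norm i)
  linarith [norm_le_insert' y (d i)]

theorem exists_seq_dual_separating_topologicalClosure {S : Submodule ℝ X}
    (hS : TopologicalSpace.IsSeparable (S : Set X)) :
    ∃ g : ℕ → StrongDual ℝ X, ∀ z ∈ S.topologicalClosure, ∀ w ∈ S.topologicalClosure,
      (∀ n, g n z = g n w) → z = w := by
  obtain ⟨c, hc, hSc⟩ := hS
  obtain ⟨d, rfl⟩ := hc.exists_eq_range (closure_nonempty_iff.1 ⟨0, hSc S.zero_mem⟩)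
  choose g hg_norm hg_apply using fun n => exists_dual_vector'' ℝ (d n)
  refine ⟨g, fun z hz w hw hzw => sub_eq_zero.1 ?_⟩
  have hsub : z - w ∈ closure (Set.range d) := by
    have := S.topologicalClosure.sub_mem hz hw
    rw [← SetLike.mem_coe, Submodule.topologicalClosure_coe] at this
    exact closure_minimal hSc isClosed_closure this
  exact eq_zero_of_mem_closure_range_of_norming hg_norm (fun n => by exact_mod_cast hg_apply n)
    hsub fun n => by rw [map_sub, hzw, sub_self]

theorem exists_subseq_weakConvSeq_of_isCompact {C : Set X} (hC : IsCompact (toWeakSpace ℝ X '' C))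
    {v : ℕ → X} (hv : ∀ n, v n ∈ C) :
    ∃ y ∈ C, ∃ φ : ℕ → ℕ, StrictMono φ ∧ WeakConvSeq (v ∘ φ) y := by
  set S := (Submodule.span ℝ (Set.range v)).topologicalClosure
  obtain ⟨g, hg⟩ := exists_seq_dual_separating_topologicalClosure
    (Set.countable_range v).isSeparable.span
  set K := toWeakSpace ℝ X '' (C ∩ S) with hK_def
  have hK : IsCompact K := by
    rw [hK_def, Set.image_inter (toWeakSpace ℝ X).injective]
    refine hC.inter_right ?_
    rw [Submodule.topologicalClosure_coe, (Submodule.convex _).toWeakSpace_closure ℝ]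
    exact isClosed_closure
  have := isCompact_iff_compactSpace.1 hK
  have : TopologicalSpace.MetrizableSpace K :=
    Metric.PiNatEmbed.TopologicalSpace.MetrizableSpace.of_countable_separating
      (fun n (k : K) => g n ((toWeakSpace ℝ X).symm k))
      (fun n => (continuous_apply_toWeakSpace_symm (g n)).comp continuous_subtype_val)
      (by
        rintro ⟨_, z, hz, rfl⟩ ⟨_, w, hw, rfl⟩ hne
        by_contra! h
        exact hne (by simp [hg z hz.2 w hw.2 (by simpa using h)]))
  obtain ⟨⟨_, y, hy, rfl⟩, φ, hφ, hlim⟩ := SeqCompactSpace.tendsto_subseq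
    fun n => (⟨toWeakSpace ℝ X (v n), v n,
      ⟨hv n, subset_closure (Submodule.subset_span ⟨n, rfl⟩)⟩, rfl⟩ : K)
  exact ⟨y, hy.1, φ, hφ,
    weakConvSeq_of_tendsto_toWeakSpace ((continuous_subtype_val.tendsto _).comp hlim)⟩

end WeakTopology

theorem sum_mul_liminf_le_liminf {ι : Type*} (s : Finset ι) {a : ι → ℝ} (ha : ∀ i ∈ s, 0 ≤ a i)
    {f : ι → ℕ → ℝ} {g e : ℕ → ℝ} (hf : ∀ i ∈ s, IsBoundedUnder (· ≥ ·) atTop (f i))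
    (hg : IsCoboundedUnder (· ≥ ·) atTop g) (he : Tendsto e atTop (𝓝 0))
    (hfg : ∀ k, ∑ i ∈ s, a i * f i k ≤ g k + e k) :
    ∑ i ∈ s, a i * liminf (f i) atTop ≤ liminf g atTop := by
  set A := ∑ i ∈ s, a i
  have hA : 0 ≤ A := Finset.sum_nonneg ha
  suffices h : ∀ δ > 0, ∑ i ∈ s, a i * liminf (f i) atTop - δ * (A + 1) ≤ liminf g atTop by
    refine le_of_forall_pos_le_add fun ε hε => ?_
    have := h (ε / (A + 1)) (by positivity)
    rwa [div_mul_cancel₀ _ (by positivity), sub_le_iff_le_add] at this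
  intro δ hδ
  have hf_ev : ∀ᶠ k in atTop, ∀ i ∈ s, liminf (f i) atTop - δ ≤ f i k :=
    (s.eventually_all).2 fun i hi =>
      (eventually_lt_of_lt_liminf (sub_lt_self _ hδ) (hf i hi)).mono fun _ => le_of_lt
  refine le_liminf_of_le hg ?_
  filter_upwards [hf_ev, he.eventually (gt_mem_nhds hδ)] with k hfk hek
  have hsum : ∑ i ∈ s, a i * (liminf (f i) atTop - δ) ≤ ∑ i ∈ s, a i * f i k :=
    Finset.sum_le_sum fun i hi => mul_le_mul_of_nonneg_left (hfk i hi) (ha i hi)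
  simp only [mul_sub, Finset.sum_sub_distrib, ← Finset.sum_mul] at hsum
  linarith [hfg k]

theorem le_of_sum_mul_le_of_forall_le {ι : Type*} {s : Finset ι} {a r : ι → ℝ} {c : ℝ}
    (ha : ∀ i ∈ s, 0 ≤ a i) (hsum : ∑ i ∈ s, a i = 1) (hr : ∀ i ∈ s, c ≤ r i)
    (h : ∑ i ∈ s, a i * r i ≤ c) {i : ι} (hi : i ∈ s) (hai : 0 < a i) : r i ≤ c := by
  have hdev : ∑ j ∈ s, a j * (r j - c) ≤ 0 := by
    simp only [mul_sub, Finset.sum_sub_distrib, ← Finset.sum_mul, hsum]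
    linarith
  have hterm : a i * (r i - c) ≤ ∑ j ∈ s, a j * (r j - c) :=
    Finset.single_le_sum (f := fun j => a j * (r j - c))
      (fun j hj => mul_nonneg (ha j hj) (sub_nonneg.2 (hr j hj))) hi
  nlinarith

theorem exists_tendsto_of_sum_mul_shift_le {N : ℕ} {a : Fin N → ℝ} (ha : ∀ i, 0 ≤ a i)
    (hsum : ∑ i, a i = 1) {c : ℕ → ℝ} (hc : ∀ n, 0 ≤ c n)
    (hdec : ∀ n, ∑ i : Fin N, a i * c (n + i + 1) ≤ c n)
    (hreg : ∀ m, Tendsto (fun n => c (n + m) - c n) atTop (𝓝 0)) :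
    ∃ L, Tendsto c atTop (𝓝 L) := by
  set s : ℕ → ℝ := fun n => ∑ i : Fin N, a i * ∑ j ∈ Finset.range (i + 1), c (n + j)
  set K : ℝ := ∑ i : Fin N, a i * ((i : ℝ) + 1)
  have hs_succ : ∀ n, s n - s (n + 1) = c n - ∑ i : Fin N, a i * c (n + i + 1) := by
    intro n
    have hwindow : ∀ i : ℕ, ∑ j ∈ Finset.range (i + 1), c (n + j) -
        ∑ j ∈ Finset.range (i + 1), c (n + 1 + j) = c n - c (n + i + 1) := by
      intro i
      rw [Finset.sum_range_succ', Finset.sum_range_succ]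
      simp only [add_zero, ← add_assoc, add_right_comm n 1]
      ring
    calc s n - s (n + 1) = ∑ i : Fin N, a i * (∑ j ∈ Finset.range (i + 1), c (n + j) -
          ∑ j ∈ Finset.range (i + 1), c (n + 1 + j)) := by
          simp only [s, mul_sub, Finset.sum_sub_distrib]
      _ = ∑ i : Fin N, a i * (c n - c (n + i + 1)) := by simp only [hwindow]
      _ = c n - ∑ i : Fin N, a i * c (n + i + 1) := by
          simp only [mul_sub, Finset.sum_sub_distrib, ← Finset.sum_mul, hsum, one_mul]
  have hs_anti : Antitone s :=
    antitone_nat_of_succ_le fun n => by linarith [hs_succ n, hdec n]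
  have hs_nonneg : ∀ n, 0 ≤ s n := fun n =>
    Finset.sum_nonneg fun i _ => mul_nonneg (ha i) (Finset.sum_nonneg fun j _ => hc _)
  obtain ⟨L, hL⟩ : ∃ L, Tendsto s atTop (𝓝 L) :=
    ⟨_, tendsto_atTop_ciInf hs_anti ⟨0, Set.forall_mem_range.2 hs_nonneg⟩⟩
  have hK : 1 ≤ K := by
    rw [← hsum]
    exact Finset.sum_le_sum fun i _ => le_mul_of_one_le_right (ha i) (by simp)
  have hs_sub : Tendsto (fun n => s n - K * c n) atTop (𝓝 0) := by
    have hrw : ∀ n, s n - K * c n =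
        ∑ i : Fin N, a i * ∑ j ∈ Finset.range (i + 1), (c (n + j) - c n) := by
      intro n
      simp only [s, K, Finset.sum_mul, ← Finset.sum_sub_distrib]
      refine Finset.sum_congr rfl fun i _ => ?_
      rw [Finset.sum_sub_distrib, Finset.sum_const, Finset.card_range, nsmul_eq_mul]
      push_cast
      ring
    have := tendsto_finsetSum Finset.univ fun (i : Fin N) _ =>
      (tendsto_finsetSum (Finset.range (i + 1)) fun j _ => hreg j).const_mul (a i)
    simp only [Finset.sum_const_zero, mul_zero] at this
    exact this.congr fun n => (hrw n).symm
  refine ⟨L / K, ?_⟩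
  have := (hL.sub hs_sub).div_const K
  rw [sub_zero] at this
  refine this.congr fun n => ?_
  field_simp
  ring

section Iteration

variable {X : Type*} [NormedAddCommGroup X]

def AsymptoticallyRegularAt (T : X → X) (x : X) : Prop :=
  Tendsto (fun n => ‖T^[n] x - T^[n + 1] x‖) atTop (𝓝 0)

theorem AsymptoticallyRegularAt.tendsto_norm_sub_iterate {T : X → X} {x : X}
    (h : AsymptoticallyRegularAt T x) (m : ℕ) :
    Tendsto (fun n => ‖T^[n] x - T^[m] (T^[n] x)‖) atTop (𝓝 0) := by
  induction m with
  | zero => simp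
  | succ m ih =>
    have hstep : Tendsto (fun n => ‖T^[m] (T^[n] x) - T^[m + 1] (T^[n] x)‖) atTop (𝓝 0) := by
      refine (h.comp (tendsto_add_atTop_nat m)).congr fun n => ?_
      rw [Function.comp_apply, ← Function.iterate_add_apply, ← Function.iterate_add_apply,
        Nat.add_right_comm m 1 n, Nat.add_comm m n]
    refine squeeze_zero (fun n => norm_nonneg _)
      (fun n => norm_sub_le_norm_sub_add_norm_sub _ (T^[m] (T^[n] x)) _) ?_
    simpa using ih.add hstep

end Iteration

namespace OpialSet

variable {X : Type*} [NormedAddCommGroup X] [NormedSpace ℝ X] {C : Set X}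

theorem eq_of_tendsto_norm_sub (hC : OpialSet C) {v w : ℕ → X} (hv : ∀ k, v k ∈ C)
    (hw : ∀ k, w k ∈ C) {y z : X} (hvy : WeakConvSeq v y) (hwz : WeakConvSeq w z) {Ly Lz : ℝ}
    (hvLy : Tendsto (fun k => ‖v k - y‖) atTop (𝓝 Ly))
    (hvLz : Tendsto (fun k => ‖v k - z‖) atTop (𝓝 Lz))
    (hwLy : Tendsto (fun k => ‖w k - y‖) atTop (𝓝 Ly))
    (hwLz : Tendsto (fun k => ‖w k - z‖) atTop (𝓝 Lz)) : y = z := by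
  by_contra hyz
  have hlt := hC v y hv hvy z (Ne.symm hyz)
  have hgt := hC w z hw hwz y hyz
  rw [hvLy.liminf_eq, hvLz.liminf_eq] at hlt
  rw [hwLy.liminf_eq, hwLz.liminf_eq] at hgt
  exact hlt.not_gt hgt

theorem exists_weakConvSeq_of_forall_subseq (hC : OpialSet C) {u : ℕ → X} (hu : ∀ n, u n ∈ C)
    {F : Set X} (hF : ∀ z ∈ F, ∃ L, Tendsto (fun n => ‖u n - z‖) atTop (𝓝 L))
    (hsub : ∀ ns : ℕ → ℕ, Tendsto ns atTop atTop →
      ∃ φ : ℕ → ℕ, Tendsto φ atTop atTop ∧ ∃ z ∈ F, WeakConvSeq (u ∘ ns ∘ φ) z) :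
    ∃ y ∈ F, WeakConvSeq u y := by
  obtain ⟨φ, hφ, y, hyF, hy⟩ := hsub id tendsto_id
  obtain ⟨Ly, hLy⟩ := hF y hyF
  refine ⟨y, hyF, fun f => tendsto_of_subseq_tendsto fun ns hns => ?_⟩
  obtain ⟨ψ, hψ, z, hzF, hz⟩ := hsub ns hns
  obtain ⟨Lz, hLz⟩ := hF z hzF
  have hnsψ := hns.comp hψ
  have hzy : z = y := hC.eq_of_tendsto_norm_sub (fun _ => hu _) (fun _ => hu _) hz hy
    (hLz.comp hnsψ) (hLy.comp hnsψ) (hLz.comp hφ) (hLy.comp hφ)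
  exact ⟨ψ, hzy ▸ hz f⟩

end OpialSet

section MeanNonexpansive

variable {X : Type*} [NormedAddCommGroup X]

def MeanNonexpansiveOn {n : ℕ} (α : Fin n → ℝ) (T : X → X) (C : Set X) : Prop :=
  ∀ x ∈ C, ∀ y ∈ C, ∑ j : Fin n, α j * ‖T^[(j : ℕ) + 1] x - T^[(j : ℕ) + 1] y‖ ≤ ‖x - y‖

variable {n : ℕ} {α : Fin n → ℝ} {T : X → X} {C : Set X}

theorem MeanNonexpansiveOn.exists_tendsto_norm_iterate_sub (hT : MeanNonexpansiveOn α T C)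
    (hα_nonneg : ∀ j, 0 ≤ α j) (hα_sum : ∑ j, α j = 1) {x : X} (hx : ∀ k, T^[k] x ∈ C)
    (hreg : AsymptoticallyRegularAt T x) {z : X} (hz : z ∈ C) (hfix : T z = z) :
    ∃ L, Tendsto (fun k => ‖T^[k] x - z‖) atTop (𝓝 L) := by
  refine exists_tendsto_of_sum_mul_shift_le hα_nonneg hα_sum (fun _ => norm_nonneg _)
    (fun k => le_of_eq_of_le (Finset.sum_congr rfl fun j _ => ?_) (hT _ (hx k) z hz))
    (fun m => squeeze_zero_norm (fun k => ?_) (hreg.tendsto_norm_sub_iterate m))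
  · rw [Function.iterate_fixed hfix, ← Function.iterate_add_apply, Nat.add_comm _ k, ← add_assoc]
  · rw [← Function.iterate_add_apply, Nat.add_comm m k, Real.norm_eq_abs]
    refine (abs_norm_sub_norm_le _ _).trans_eq ?_
    rw [sub_sub_sub_cancel_right, norm_sub_rev]

end MeanNonexpansive

theorem OpialSet.iterate_eq_of_weakConvSeq {X : Type*} [NormedAddCommGroup X] [NormedSpace ℝ X]
    {C : Set X} (hC : OpialSet C) (hCb : Bornology.IsBounded C) {n : ℕ} {α : Fin n → ℝ}
    {T : X → X} (hT : MeanNonexpansiveOn α T C) (hα_nonneg : ∀ j, 0 ≤ α j)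
    (hα_sum : ∑ j, α j = 1) {w : ℕ → X} (hw : ∀ k, w k ∈ C) {z : X} (hz : z ∈ C)
    (hwz : WeakConvSeq w z) (happrox : ∀ m, Tendsto (fun k => ‖w k - T^[m] (w k)‖) atTop (𝓝 0))
    {j : Fin n} (hj : 0 < α j) : T^[(j : ℕ) + 1] z = z := by
  set ρ : X → ℝ := fun v => liminf (fun k => ‖w k - v‖) atTop
  have hρ_min : ∀ v, ρ z ≤ ρ v := fun v =>
    (eq_or_ne v z).elim (fun h => h ▸ le_rfl) fun h => (hC w z hw hwz v h).le
  set e : ℕ → ℝ := fun k => ∑ i : Fin n, α i * ‖w k - T^[(i : ℕ) + 1] (w k)‖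
  have he : Tendsto e atTop (𝓝 0) := by
    simpa only [mul_zero, Finset.sum_const_zero] using tendsto_finsetSum Finset.univ
      fun (i : Fin n) _ => (happrox ((i : ℕ) + 1)).const_mul (α i)
  have hineq : ∀ k, ∑ i : Fin n, α i * ‖w k - T^[(i : ℕ) + 1] z‖ ≤ ‖w k - z‖ + e k := by
    intro k
    calc ∑ i : Fin n, α i * ‖w k - T^[(i : ℕ) + 1] z‖
        ≤ ∑ i : Fin n, α i * (‖w k - T^[(i : ℕ) + 1] (w k)‖ +
            ‖T^[(i : ℕ) + 1] (w k) - T^[(i : ℕ) + 1] z‖) :=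
          Finset.sum_le_sum fun i _ => mul_le_mul_of_nonneg_left
            (norm_sub_le_norm_sub_add_norm_sub _ _ _) (hα_nonneg i)
      _ = e k + ∑ i : Fin n, α i * ‖T^[(i : ℕ) + 1] (w k) - T^[(i : ℕ) + 1] z‖ := by
          simp only [e, mul_add, Finset.sum_add_distrib]
      _ ≤ ‖w k - z‖ + e k := by linarith [hT _ (hw k) _ hz]
  obtain ⟨M, hM⟩ := hCb.exists_norm_le
  have hcobdd : IsCoboundedUnder (· ≥ ·) atTop fun k => ‖w k - z‖ :=
    (isBoundedUnder_of ⟨M + ‖z‖, fun k =>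
      (norm_sub_le _ _).trans (by linarith [hM _ (hw k)])⟩).isCoboundedUnder_ge
  have hmean : ∑ i : Fin n, α i * ρ (T^[(i : ℕ) + 1] z) ≤ ρ z :=
    sum_mul_liminf_le_liminf Finset.univ (fun i _ => hα_nonneg i)
      (fun i _ => isBoundedUnder_of ⟨0, fun k => norm_nonneg _⟩) hcobdd he hineq
  have hle : ρ (T^[(j : ℕ) + 1] z) ≤ ρ z :=
    le_of_sum_mul_le_of_forall_le (fun i _ => hα_nonneg i) hα_sum (fun i _ => hρ_min _) hmean
      (Finset.mem_univ j) hj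
  by_contra hne
  exact (hC w z hw hwz _ hne).not_ge hle

theorem weak_convergence_of_mean_nonexpansive
    {X : Type*} [NormedAddCommGroup X] [NormedSpace ℝ X]
    (C : Set X) (hC_wcompact : IsCompact (toWeakSpace ℝ X '' C))
    (hC_opial : OpialSet C)
    (T : X → X) (hT : Set.MapsTo T C C)
    (n₀ : ℕ) (hn₀ : 0 < n₀) (α : Fin n₀ → ℝ)
    (hα_nonneg : ∀ j, 0 ≤ α j)
    (hα_first : 0 < α ⟨0, hn₀⟩)
    (hα_sum : ∑ j, α j = 1)
    (hne : ∀ x ∈ C, ∀ y ∈ C,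
      ∑ j : Fin n₀, α j * ‖T^[(j : ℕ) + 1] x - T^[(j : ℕ) + 1] y‖ ≤ ‖x - y‖)
    (x : X) (hx : x ∈ C)
    (har : Filter.Tendsto (fun n => ‖T^[n] x - T^[n + 1] x‖) Filter.atTop (nhds 0)) :
    ∃ y ∈ C, T y = y ∧ WeakConvSeq (fun n => T^[n] x) y := by
  have hne : MeanNonexpansiveOn α T C := hne
  have har : AsymptoticallyRegularAt T x := har
  have hCb := isBounded_of_isCompact_toWeakSpace hC_wcompact
  have horbit : ∀ n, T^[n] x ∈ C := fun n => hT.iterate n hx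
  have hcluster : ∀ ns : ℕ → ℕ, Tendsto ns atTop atTop → ∃ φ : ℕ → ℕ,
      Tendsto φ atTop atTop ∧ ∃ z ∈ {z ∈ C | T z = z}, WeakConvSeq ((T^[·] x) ∘ ns ∘ φ) z := by
    intro ns hns
    obtain ⟨z, hzC, φ, hφ, hz⟩ :=
      exists_subseq_weakConvSeq_of_isCompact hC_wcompact fun k => horbit (ns k)
    have happrox (m : ℕ) := (har.tendsto_norm_sub_iterate m).comp (hns.comp hφ.tendsto_atTop)
    exact ⟨φ, hφ.tendsto_atTop, z, ⟨hzC, hC_opial.iterate_eq_of_weakConvSeq hCb hne hα_nonneg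
      hα_sum (fun k => horbit _) hzC hz happrox hα_first⟩, hz⟩
  obtain ⟨y, ⟨hyC, hTy⟩, hy⟩ := hC_opial.exists_weakConvSeq_of_forall_subseq horbit
    (fun z hz => hne.exists_tendsto_norm_iterate_sub hα_nonneg hα_sum horbit har hz.1 hz.2)
    hcluster
  exact ⟨y, hyC, hTy, hy⟩
end

section
/- Let X be a Banach space and let C ⊆ X be a weakly compact, convex set having the Opial property. Suppose T : C → C is α-nonexpansive for some multi-index α = (α₁, …, α_{n₀}) (with α₁ > 0, α_{n₀} > 0, α_j ≥ 0 for all j, and α₁ + ⋯ + α_{n₀} = 1), and T is asymptotically regular at some x ∈ C. Then for every y in the weak ω-limit set ω_w(x) of the orbit (Tⁿx)ₙ, the limit limₙ ‖Tⁿx − y‖ exists. -/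
open Filter Topology

/-!
Let `u_k = T^[φ k] x` converge weakly to `y ∈ ω_w(x)`. Asymptotic regularity gives
`‖T^[j] u_k - u_k‖ → 0`, so mean nonexpansiveness yields `∑ α_j r(T^[j+1] y) ≤ r(y)` for the
asymptotic radius `r(v) = liminf ‖u_k - v‖`; by the Opial property `r(y) < r(v)` for `v ≠ y`,
and since the first weight is positive this forces `T y = y`.

For a fixed point `y`, `a_n = ‖T^[n] x - y‖` satisfies `∑ α_j a_{n+j+1} ≤ a_n`. Then the potential
`c_n = ∑ α_j (a_n + ⋯ + a_{n+j})` is nonincreasing, hence convergent, and because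
`a_{n+1} - a_n → 0` it is asymptotic to `(∑ (j+1) α_j) a_n`.
-/

theorem tendsto_sub_add_nat_of_tendsto_succ_sub {G : Type*} [AddCommGroup G] [TopologicalSpace G]
    [IsTopologicalAddGroup G] {u : ℕ → G}
    (h : Tendsto (fun n => u (n + 1) - u n) atTop (𝓝 0)) (k : ℕ) :
    Tendsto (fun n => u (n + k) - u n) atTop (𝓝 0) := by
  induction k with
  | zero => simpa using tendsto_const_nhds
  | succ k ih =>
    have hk := (h.comp (tendsto_add_atTop_nat k)).add ih
    rw [add_zero] at hk
    refine hk.congr fun n => ?_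
    simp only [Function.comp_apply, ← add_assoc, sub_add_sub_cancel]

theorem WeakConvSeq.exists_norm_le {X : Type*} [NormedAddCommGroup X] [NormedSpace ℝ X]
    {u : ℕ → X} {y : X} (h : WeakConvSeq u y) : ∃ M, ∀ k, ‖u k‖ ≤ M := by
  obtain ⟨M, hM⟩ := banach_steinhaus
    (g := fun k => NormedSpace.inclusionInDoubleDualLi ℝ (u k)) fun f => by
      obtain ⟨B, hB⟩ := (h f).norm.bddAbove_range
      exact ⟨B, fun k => hB (Set.mem_range_self k)⟩
  exact ⟨M, fun k => (NormedSpace.inclusionInDoubleDualLi ℝ).norm_map (u k) ▸ hM k⟩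

theorem sum_mul_liminf_le_liminf_of_le_add {ι : Type*} [Fintype ι] {α : ι → ℝ}
    (hα : ∀ i, 0 ≤ α i) {f : ι → ℕ → ℝ} {g ε : ℕ → ℝ}
    (hf : ∀ i, IsBoundedUnder (· ≥ ·) atTop (f i)) (hg : IsCoboundedUnder (· ≥ ·) atTop g)
    (hε : Tendsto ε atTop (𝓝 0)) (hfg : ∀ k, ∑ i, α i * f i k ≤ g k + ε k) :
    ∑ i, α i * liminf (f i) atTop ≤ liminf g atTop := by
  refine le_of_forall_pos_le_add fun δ hδ => ?_
  set S := ∑ i, α i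
  have hS : 0 ≤ S := Finset.sum_nonneg fun i _ => hα i
  set η := δ / (S + 2)
  have hη : 0 < η := div_pos hδ (by linarith)
  have hηδ : (S + 2) * η = δ := mul_div_cancel₀ δ (by linarith)
  have hf_ev : ∀ᶠ k in atTop, ∀ i, liminf (f i) atTop - η < f i k :=
    eventually_all.2 fun i => eventually_lt_of_lt_liminf (by linarith) (hf i)
  have hg_freq : ∃ᶠ k in atTop, g k < liminf g atTop + η :=
    frequently_lt_of_liminf_lt hg (by linarith)
  obtain ⟨k, ⟨hfk, hεk⟩, hgk⟩ :=
    ((hf_ev.and (hε.eventually_lt_const hη)).and_frequently hg_freq).exists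
  calc ∑ i, α i * liminf (f i) atTop
      = ∑ i, α i * (liminf (f i) atTop - η) + S * η := by
        simp only [S, mul_sub, Finset.sum_sub_distrib, Finset.sum_mul]; ring
    _ ≤ ∑ i, α i * f i k + S * η := by
        gcongr with i
        exacts [hα i, (hfk i).le]
    _ ≤ liminf g atTop + δ := by linarith [hfg k]

theorem OpialSet.apply_eq_self_of_weakConvSeq {X : Type*} [NormedAddCommGroup X]
    [NormedSpace ℝ X] {C : Set X} (hC : OpialSet C) {T : X → X} {n₀ : ℕ} (hn₀ : 0 < n₀)
    {α : Fin n₀ → ℝ} (hα_nonneg : ∀ j, 0 ≤ α j) (hα_first : 0 < α ⟨0, hn₀⟩)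
    (hα_sum : ∑ j, α j = 1)
    (hne : ∀ x ∈ C, ∀ y ∈ C,
      ∑ j : Fin n₀, α j * ‖T^[(j : ℕ) + 1] x - T^[(j : ℕ) + 1] y‖ ≤ ‖x - y‖)
    {u : ℕ → X} {y : X} (hu : ∀ k, u k ∈ C) (hy : y ∈ C) (huy : WeakConvSeq u y)
    (hu_reg : ∀ j : Fin n₀, Tendsto (fun k => ‖T^[(j : ℕ) + 1] (u k) - u k‖) atTop (𝓝 0)) :
    T y = y := by
  obtain ⟨M, hM⟩ := huy.exists_norm_le
  set r : X → ℝ := fun v => liminf (fun k => ‖u k - v‖) atTop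
  have hradius : ∑ j, α j * r (T^[(j : ℕ) + 1] y) ≤ r y := by
    refine sum_mul_liminf_le_liminf_of_le_add hα_nonneg
      (fun j => isBoundedUnder_of ⟨0, fun k => norm_nonneg _⟩)
      (isBoundedUnder_of ⟨M + ‖y‖, fun k => (norm_sub_le _ _).trans (by linarith [hM k])⟩ :
        IsBoundedUnder (· ≤ ·) atTop _).isCoboundedUnder_ge
      (by simpa using tendsto_finsetSum Finset.univ fun j _ => (hu_reg j).const_mul (α j))
      fun k => ?_
    calc ∑ j, α j * ‖u k - T^[(j : ℕ) + 1] y‖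
        ≤ ∑ j, (α j * ‖T^[(j : ℕ) + 1] (u k) - T^[(j : ℕ) + 1] y‖
            + α j * ‖T^[(j : ℕ) + 1] (u k) - u k‖) := by
          gcongr with j
          rw [← mul_add]
          gcongr
          · exact hα_nonneg j
          · exact norm_sub_le_norm_sub_add_norm_sub .. |>.trans_eq (by rw [norm_sub_rev, add_comm])
      _ ≤ ‖u k - y‖ + ∑ j, α j * ‖T^[(j : ℕ) + 1] (u k) - u k‖ := by
          rw [Finset.sum_add_distrib]
          gcongr
          exact hne _ (hu k) y hy
  have hopial : ∀ v, v ≠ y → r y < r v := hC u y hu huy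
  have hopial_le (v : X) : r y ≤ r v := by
    rcases eq_or_ne v y with rfl | hv
    exacts [le_rfl, (hopial v hv).le]
  by_contra hTy
  have : r y < ∑ j, α j * r (T^[(j : ℕ) + 1] y) :=
    calc r y = ∑ j, α j * r y := by rw [← Finset.sum_mul, hα_sum, one_mul]
      _ < ∑ j, α j * r (T^[(j : ℕ) + 1] y) :=
        Finset.sum_lt_sum (fun j _ => mul_le_mul_of_nonneg_left (hopial_le _) (hα_nonneg j))
          ⟨⟨0, hn₀⟩, Finset.mem_univ _, mul_lt_mul_of_pos_left (hopial _ hTy) hα_first⟩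
  linarith

theorem exists_tendsto_of_sum_mul_shift_le_s4 {n : ℕ} {α : Fin n → ℝ} (hα_nonneg : ∀ j, 0 ≤ α j)
    (hα_sum : ∑ j, α j = 1) {a : ℕ → ℝ} (ha_nonneg : ∀ m, 0 ≤ a m)
    (ha : ∀ m, ∑ j : Fin n, α j * a (m + j + 1) ≤ a m)
    (ha_reg : Tendsto (fun m => a (m + 1) - a m) atTop (𝓝 0)) :
    ∃ L, Tendsto a atTop (𝓝 L) := by
  set c : ℕ → ℝ := fun m => ∑ j : Fin n, α j * ∑ i ∈ Finset.range (j + 1), a (m + i)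
  set B : ℝ := ∑ j : Fin n, α j * ((j : ℝ) + 1)
  have hshift (m j : ℕ) : ∑ i ∈ Finset.range (j + 1), a (m + 1 + i)
      = ∑ i ∈ Finset.range (j + 1), a (m + i) + a (m + j + 1) - a m := by
    have h₁ := Finset.sum_range_succ (fun i => a (m + i)) (j + 1)
    have h₂ := Finset.sum_range_succ' (fun i => a (m + i)) (j + 1)
    simp only [add_assoc, add_comm 1, add_zero] at h₁ h₂ ⊢
    linarith
  have hc_succ (m : ℕ) : c (m + 1) = c m - a m + ∑ j, α j * a (m + j + 1) := by
    simp only [c, hshift, mul_sub, mul_add, Finset.sum_sub_distrib, Finset.sum_add_distrib,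
      ← Finset.sum_mul, hα_sum, one_mul]
    ring
  have hc_anti : Antitone c := antitone_nat_of_succ_le fun m => by linarith [hc_succ m, ha m]
  have hc_nonneg (m : ℕ) : 0 ≤ c m := Finset.sum_nonneg fun j _ =>
    mul_nonneg (hα_nonneg j) (Finset.sum_nonneg fun i _ => ha_nonneg _)
  have hc_lim := tendsto_atTop_ciInf hc_anti ⟨0, by rintro _ ⟨m, rfl⟩; exact hc_nonneg m⟩
  have hB : 0 < B := by
    calc (0 : ℝ) < ∑ j, α j := by rw [hα_sum]; exact one_pos
      _ ≤ B := Finset.sum_le_sum fun j _ => le_mul_of_one_le_right (hα_nonneg j) (by simp)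
  have hcB : Tendsto (fun m => c m - B * a m) atTop (𝓝 0) := by
    have h := tendsto_finsetSum Finset.univ fun (j : Fin n) _ =>
      (tendsto_finsetSum (Finset.range (j + 1)) fun i _ =>
        tendsto_sub_add_nat_of_tendsto_succ_sub ha_reg i).const_mul (α j)
    simp only [Finset.sum_const_zero, mul_zero] at h
    refine h.congr fun m => ?_
    simp only [c, B, Finset.sum_mul, ← Finset.sum_sub_distrib]
    refine Finset.sum_congr rfl fun j _ => ?_
    simp only [mul_sub, Finset.sum_sub_distrib, Finset.sum_const, Finset.card_range,
      nsmul_eq_mul, Finset.mul_sum]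
    push_cast
    ring
  refine ⟨(⨅ m, c m) / B, ?_⟩
  have h := (hc_lim.sub hcB).div_const B
  simpa only [sub_sub_cancel, sub_zero, mul_div_cancel_left₀ _ hB.ne'] using h

theorem norm_limit_exists_of_mean_nonexpansive
    {X : Type*} [NormedAddCommGroup X] [NormedSpace ℝ X]
    (C : Set X) (hC_opial : OpialSet C)
    (T : X → X) (hT : Set.MapsTo T C C)
    (n₀ : ℕ) (hn₀ : 0 < n₀) (α : Fin n₀ → ℝ)
    (hα_nonneg : ∀ j, 0 ≤ α j)
    (hα_first : 0 < α ⟨0, hn₀⟩)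
    (hα_sum : ∑ j, α j = 1)
    (hne : ∀ x ∈ C, ∀ y ∈ C,
      ∑ j : Fin n₀, α j * ‖T^[(j : ℕ) + 1] x - T^[(j : ℕ) + 1] y‖ ≤ ‖x - y‖)
    (x : X) (hx : x ∈ C)
    (har : Filter.Tendsto (fun n => ‖T^[n] x - T^[n + 1] x‖) Filter.atTop (nhds 0)) :
    ∀ y ∈ omegaW T C x,
      ∃ L : ℝ, Filter.Tendsto (fun n => ‖T^[n] x - y‖) Filter.atTop (nhds L) := by
  rintro y ⟨hyC, φ, hφ, hconv⟩
  have hstep : Tendsto (fun n => T^[n + 1] x - T^[n] x) atTop (𝓝 0) := by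
    rw [tendsto_zero_iff_norm_tendsto_zero]
    simpa only [norm_sub_rev] using har
  have hfix : T y = y := by
    refine hC_opial.apply_eq_self_of_weakConvSeq hn₀ hα_nonneg hα_first hα_sum hne
      (fun k => hT.iterate _ hx) hyC hconv fun j => ?_
    have h := tendsto_zero_iff_norm_tendsto_zero.1 <|
      (tendsto_sub_add_nat_of_tendsto_succ_sub (u := fun n => T^[n] x) hstep (j + 1)).comp
        hφ.tendsto_atTop
    simpa only [Function.comp_apply, ← Function.iterate_add_apply, add_comm] using h
  refine exists_tendsto_of_sum_mul_shift_le_s4 hα_nonneg hα_sum (a := fun n => ‖T^[n] x - y‖)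
    (fun n => norm_nonneg _) (fun n => ?_) ?_
  · have h := hne _ (hT.iterate n hx) y hyC
    convert h using 4 with j
    rw [Function.iterate_fixed hfix, ← Function.iterate_add_apply]
    ring_nf
  · refine squeeze_zero_norm (fun n => ?_) (tendsto_zero_iff_norm_tendsto_zero.1 hstep)
    simpa only [Real.norm_eq_abs, sub_sub_sub_cancel_right] using
      abs_norm_sub_norm_le (T^[n + 1] x - y) (T^[n] x - y)
end

section
/- Let X be a Banach space, let C ⊆ X be a closed convex set, and suppose T : C → C is α-nonexpansive for some multi-index α = (α₁, …, α_{n₀}) (with α₁ > 0, α_{n₀} > 0, α_j ≥ 0 for all j, and α₁ + ⋯ + α_{n₀} = 1) and T is asymptotically regular at some x ∈ C. Then for every fixed point y of T, the limit limₙ ‖Tⁿx − y‖ exists. -/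
open Filter Topology

theorem norm_limit_exists_at_fixed_points_of_mean_nonexpansive
    {X : Type*} [NormedAddCommGroup X] [NormedSpace ℝ X] [CompleteSpace X]
    (C : Set X) (hC_closed : IsClosed C) (hC_convex : Convex ℝ C)
    (T : X → X) (hT : Set.MapsTo T C C)
    (n₀ : ℕ) (hn₀ : 0 < n₀) (α : Fin n₀ → ℝ)
    (hα_nonneg : ∀ j, 0 ≤ α j)
    (hα_first : 0 < α ⟨0, hn₀⟩)
    (hα_last : 0 < α ⟨n₀ - 1, by omega⟩)
    (hα_sum : ∑ j, α j = 1)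
    (hne : ∀ x ∈ C, ∀ y ∈ C,
      ∑ j : Fin n₀, α j * ‖T^[(j : ℕ) + 1] x - T^[(j : ℕ) + 1] y‖ ≤ ‖x - y‖)
    (x : X) (hx : x ∈ C)
    (har : Filter.Tendsto (fun n => ‖T^[n] x - T^[n + 1] x‖) Filter.atTop (nhds 0)) :
    ∀ y ∈ C, T y = y →
      ∃ L : ℝ, Filter.Tendsto (fun n => ‖T^[n] x - y‖) Filter.atTop (nhds L) := by
  intro y hy hfy
  classical
  set a : ℕ → ℝ := fun n => ‖T^[n] x - y‖ with ha
  set b : ℕ → ℝ := fun n => ‖T^[n] x - T^[n + 1] x‖ with hb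
  have horb : ∀ n, T^[n] x ∈ C := fun n => Set.MapsTo.iterate hT n hx
  have hyfix : ∀ k, T^[k] y = y := fun k => Function.iterate_fixed hfy k
  have hstep : ∀ n, |a (n + 1) - a n| ≤ b n := by
    intro n
    have h := abs_norm_sub_norm_le (T^[n + 1] x - y) (T^[n] x - y)
    simpa [a, b, norm_sub_rev, sub_sub_sub_cancel_right] using h
  have key : ∀ n, ∃ j, 1 ≤ j ∧ j ≤ n₀ ∧ a (n + j) ≤ a n := by
    intro n
    by_contra h
    push_neg at h
    have hlt : ∀ j : Fin n₀, a n < a (n + ((j : ℕ) + 1)) := fun j =>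
      h ((j : ℕ) + 1) (by omega) (by omega)
    have hsum := hne (T^[n] x) (horb n) y hy
    have hterm : ∀ j : Fin n₀,
        ‖T^[(j : ℕ) + 1] (T^[n] x) - T^[(j : ℕ) + 1] y‖ = a (n + ((j : ℕ) + 1)) := by
      intro j
      have h1 : T^[(j : ℕ) + 1] (T^[n] x) = T^[n + ((j : ℕ) + 1)] x := by
        rw [← Function.iterate_add_apply]
        congr 1
        omega
      rw [h1, hyfix]
    rw [Finset.sum_congr rfl (fun j _ => by rw [hterm j])] at hsum
    have hlt2 : a n < ∑ j : Fin n₀, α j * a (n + ((j : ℕ) + 1)) := by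
      calc a n = ∑ j : Fin n₀, α j * a n := by rw [← Finset.sum_mul, hα_sum, one_mul]
        _ < _ := by
          apply Finset.sum_lt_sum
          · exact fun j _ => mul_le_mul_of_nonneg_left (le_of_lt (hlt j)) (hα_nonneg j)
          · exact ⟨⟨0, hn₀⟩, Finset.mem_univ _,
              mul_lt_mul_of_pos_left (hlt ⟨0, hn₀⟩) hα_first⟩
    have : a n < a n := lt_of_lt_of_le hlt2 hsum
    exact lt_irrefl _ this
  choose jf hj1 hj2 hj3 using key
  have main : ∀ ε : ℝ, 0 < ε → ∃ N : ℕ, ∀ n, N ≤ n → ∀ m, n ≤ m →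
      a m ≤ a n + (n₀ : ℝ) * ε := by
    intro ε hε
    obtain ⟨N, hN⟩ := Metric.tendsto_atTop.mp har ε hε
    have hbN : ∀ i, N ≤ i → b i ≤ ε := by
      intro i hi
      have h := hN i hi
      rw [Real.dist_eq, sub_zero] at h
      exact le_of_lt (lt_of_le_of_lt (le_abs_self _) h)
    refine ⟨N, ?_⟩
    intro n hn
    set g : ℕ → ℕ := fun k => Nat.rec n (fun _ m => m + jf m) k with hg
    have hg0 : g 0 = n := rfl
    have hgs : ∀ k, g (k + 1) = g k + jf (g k) := fun k => rfl
    have hgn : ∀ k, n ≤ g k := by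
      intro k
      induction k with
      | zero => exact le_refl n
      | succ k ih => exact le_trans ih (by rw [hgs]; exact Nat.le_add_right _ _)
    have hga : ∀ k, a (g k) ≤ a n := by
      intro k
      induction k with
      | zero => exact le_refl _
      | succ k ih => exact le_trans (by rw [hgs]; exact hj3 (g k)) ih
    have hacc : ∀ p, N ≤ p → ∀ q, a (p + q) ≤ a p + (q : ℝ) * ε := by
      intro p hp q
      induction q with
      | zero => simp
      | succ q ih =>
        have h1 : a (p + q + 1) - a (p + q) ≤ b (p + q) :=
          le_trans (le_abs_self _) (hstep (p + q))
        have h2 : b (p + q) ≤ ε := hbN _ (by omega)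
        have h3 : p + (q + 1) = p + q + 1 := by omega
        rw [h3]
        push_cast
        linarith
    have hloc : ∀ m, n ≤ m → ∃ k, g k ≤ m ∧ m < g (k + 1) := by
      intro m hm
      induction m, hm using Nat.le_induction with
      | base =>
        refine ⟨0, le_refl n, ?_⟩
        rw [hgs, hg0]
        have := hj1 n
        omega
      | succ m hm ih =>
        obtain ⟨k, hk1, hk2⟩ := ih
        by_cases hcase : m + 1 < g (k + 1)
        · exact ⟨k, by omega, hcase⟩
        · refine ⟨k + 1, by omega, ?_⟩
          rw [hgs (k + 1)]
          have := hj1 (g (k + 1))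
          omega
    intro m hm
    obtain ⟨k, hk1, hk2⟩ := hloc m hm
    have h1 : a m ≤ a (g k) + ((m - g k : ℕ) : ℝ) * ε := by
      have := hacc (g k) (le_trans hn (hgn k)) (m - g k)
      rwa [Nat.add_sub_cancel' hk1] at this
    have h2 : (m - g k : ℕ) ≤ n₀ := by
      have h3 := hj2 (g k)
      rw [hgs] at hk2
      omega
    have h4 : ((m - g k : ℕ) : ℝ) * ε ≤ (n₀ : ℝ) * ε := by
      apply mul_le_mul_of_nonneg_right _ (le_of_lt hε)
      exact_mod_cast h2
    linarith [hga k]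
  have ha_nonneg : ∀ n, 0 ≤ a n := fun n => norm_nonneg _
  have hbdd_below : IsBoundedUnder (· ≥ ·) atTop a :=
    isBoundedUnder_of ⟨0, fun n => ha_nonneg n⟩
  obtain ⟨N₁, hN₁⟩ := main 1 one_pos
  have hbdd_above : IsBoundedUnder (· ≤ ·) atTop a := by
    refine isBoundedUnder_of_eventually_le (a := a N₁ + (n₀ : ℝ) * 1) ?_
    filter_upwards [eventually_ge_atTop N₁] with m hm
    exact hN₁ N₁ (le_refl _) m hm
  have hls : limsup a atTop ≤ liminf a atTop := by
    apply le_of_forall_pos_le_add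
    intro ε hε
    have hε' : 0 < ε / n₀ := by positivity
    obtain ⟨N, hN⟩ := main (ε / n₀) hε'
    have hεeq : (n₀ : ℝ) * (ε / n₀) = ε := by
      field_simp
    have h1 : ∀ n, N ≤ n → limsup a atTop ≤ a n + ε := by
      intro n hn
      have hev : ∀ᶠ m in atTop, a m ≤ a n + ε := by
        filter_upwards [eventually_ge_atTop n] with m hm
        have := hN n hn m hm
        linarith
      exact limsup_le_of_le hbdd_below.isCoboundedUnder_le hev
    have h2 : limsup a atTop - ε ≤ liminf a atTop := by
      apply le_liminf_of_le hbdd_above.isCoboundedUnder_ge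
      filter_upwards [eventually_ge_atTop N] with n hn
      linarith [h1 n hn]
    linarith
  have hsl : liminf a atTop ≤ limsup a atTop := liminf_le_limsup hbdd_above hbdd_below
  have heq : liminf a atTop = limsup a atTop := le_antisymm hsl hls
  exact ⟨limsup a atTop, tendsto_of_liminf_eq_limsup heq rfl hbdd_above hbdd_below⟩
end

section
/- Let X be a uniformly convex Banach space having the Opial property, let C ⊆ X be a closed convex set, let T : C → C be α-nonexpansive for some multi-index α (with α₁ > 0, α_{n₀} > 0, α_j ≥ 0, Σ α_j = 1), asymptotically regular at some x ∈ C, and with F(T) nonempty. Define φ : F(T) → [0,∞) by φ(y) = limₙ ‖Tⁿx − y‖ (this limit exists for every y ∈ F(T)). Then there exists a unique y₀ ∈ F(T) such that φ(y₀) ≤ φ(y) for all y ∈ F(T); i.e., φ attains its infimum on F(T) at exactly one point. -/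
open Filter Topology

/-- A normed space has the Opial property. -/
def OpialSpace (X : Type*) [NormedAddCommGroup X] [NormedSpace ℝ X] : Prop :=
  ∀ (u : ℕ → X) (u₀ : X), WeakConvSeq u u₀ →
    ∀ v : X, v ≠ u₀ →
      Filter.liminf (fun n => ‖u n - u₀‖) Filter.atTop <
        Filter.liminf (fun n => ‖u n - v‖) Filter.atTop

/-!
Fix an ultrafilter `𝒰` finer than `atTop` and put `r w = lim_𝒰 ‖Tⁿx - w‖`; it agrees with `φ` on
`F(T)`. In a uniformly convex space any two near-minimisers of the 1-Lipschitz function `r` on `C`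
are close, since otherwise their midpoint would beat the infimum; hence `r` has a unique minimiser
`z₀` on the closed convex set `C` (the asymptotic centre of `(Tⁿx)`). Asymptotic regularity makes
`r` insensitive to shifting the sequence, so mean nonexpansiveness gives
`∑ αⱼ r(T^{j+1} z₀) ≤ r z₀`; as `α₁ > 0`, `T z₀` is a minimiser as well, so `T z₀ = z₀`, and `z₀`
is then the unique minimiser of `φ` on `F(T)`.
-/

theorem le_of_sum_mul_le_of_forall_le_s8 {ι : Type*} [Fintype ι] {α a : ι → ℝ} {m : ℝ}
    (hα : ∀ j, 0 ≤ α j) (hα_sum : ∑ j, α j = 1) (ha : ∀ j, m ≤ a j)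
    (h : ∑ j, α j * a j ≤ m) {j : ι} (hj : 0 < α j) : a j ≤ m := by
  have hsum : ∑ i, α i * (a i - m) ≤ 0 := by
    simpa [mul_sub, Finset.sum_sub_distrib, ← Finset.sum_mul, hα_sum] using h
  have hj_le : α j * (a j - m) ≤ 0 :=
    (Finset.single_le_sum (fun i _ => mul_nonneg (hα i) (sub_nonneg.2 (ha i)))
      (Finset.mem_univ j)).trans hsum
  nlinarith

theorem tendsto_norm_add_sub_of_tendsto_norm_sub_succ {E : Type*} [SeminormedAddCommGroup E]
    {u : ℕ → E} (h : Tendsto (fun n => ‖u n - u (n + 1)‖) atTop (𝓝 0)) (m : ℕ) :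
    Tendsto (fun n => ‖u (n + m) - u n‖) atTop (𝓝 0) := by
  induction m with
  | zero => simp
  | succ m ih =>
    have hstep : Tendsto (fun n => ‖u (n + m) - u (n + m + 1)‖) atTop (𝓝 0) :=
      h.comp (tendsto_add_atTop_nat m)
    refine squeeze_zero (fun n => norm_nonneg _) (fun n => ?_) (by simpa using hstep.add ih)
    rw [← add_assoc, norm_sub_rev (u (n + m))]
    exact norm_sub_le_norm_sub_add_norm_sub _ _ _

section UniformConvex

variable {E : Type*} [NormedAddCommGroup E] [NormedSpace ℝ E] [UniformConvexSpace E]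

theorem exists_forall_norm_le_add_le_two_mul_sub {ε : ℝ} (hε : 0 < ε) (R : ℝ) :
    ∃ δ, 0 < δ ∧ ∀ ρ ≤ R, ∀ ⦃a b : E⦄, ‖a‖ ≤ ρ → ‖b‖ ≤ ρ → ε ≤ ‖a - b‖ →
      ‖a + b‖ ≤ 2 * ρ - δ := by
  obtain ⟨δ, hδ, h⟩ := exists_forall_closed_ball_dist_add_le_two_sub E
    (div_pos hε (lt_max_of_lt_right hε : 0 < max R ε))
  refine ⟨δ * ε / 2, by positivity, fun ρ hρR a b ha hb hab => ?_⟩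
  have hρ : ε ≤ 2 * ρ := hab.trans ((norm_sub_le a b).trans (by linarith))
  have hρ0 : 0 < ρ := by linarith
  have hscale : ∀ c : E, ‖ρ⁻¹ • c‖ = ‖c‖ / ρ := fun c => by
    rw [norm_smul_of_nonneg (inv_nonneg.2 hρ0.le), inv_mul_eq_div]
  have hsum := h (x := ρ⁻¹ • a) (y := ρ⁻¹ • b)
    (by rw [hscale, div_le_one hρ0]; exact ha) (by rw [hscale, div_le_one hρ0]; exact hb)
    (by
      rw [← smul_sub, hscale]
      exact (div_le_div_of_nonneg_left hε.le hρ0 (hρR.trans (le_max_left R ε))).trans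
        (div_le_div_of_nonneg_right hab hρ0.le))
  rw [← smul_add, hscale, div_le_iff₀ hρ0] at hsum
  nlinarith

end UniformConvex

theorem existsUnique_isMinOn_of_forall_dist_lt {E : Type*} [MetricSpace E] [CompleteSpace E]
    {s : Set E} (hs : IsClosed s) {f : E → ℝ} (hf : Continuous f) {d : ℝ}
    (hd : IsGLB (f '' s) d)
    (hwp : ∀ ε > 0, ∃ η > 0, ∀ x ∈ s, ∀ y ∈ s, f x < d + η → f y < d + η → dist x y < ε) :
    ∃! z, z ∈ s ∧ IsMinOn f s z := by
  obtain ⟨v, -, -, hv, hvs⟩ := hd.exists_seq_antitone_tendsto hd.nonempty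
  choose x hxs hfx using hvs
  have hfx_lim : Tendsto (f ∘ x) atTop (𝓝 d) := by simpa [Function.comp_def, hfx] using hv
  have hx : CauchySeq x := by
    refine Metric.cauchySeq_iff'.2 fun ε hε => ?_
    obtain ⟨η, hη, hsmall⟩ := hwp ε hε
    obtain ⟨N, hN⟩ := eventually_atTop.1 (hfx_lim.eventually_lt_const (lt_add_of_pos_right d hη))
    exact ⟨N, fun n hn => hsmall _ (hxs n) _ (hxs N) (hN n hn) (hN N le_rfl)⟩
  obtain ⟨z, hz⟩ := cauchySeq_tendsto_of_complete hx
  have hzs : z ∈ s := hs.mem_of_tendsto hz (Eventually.of_forall hxs)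
  have hfz : f z = d := tendsto_nhds_unique ((hf.tendsto z).comp hz) hfx_lim
  refine ⟨z, ⟨hzs, fun y hy => hfz ▸ hd.1 ⟨y, hy, rfl⟩⟩, fun y ⟨hys, hy⟩ => ?_⟩
  by_contra hyz
  obtain ⟨η, hη, hsmall⟩ := hwp (dist y z) (dist_pos.2 hyz)
  have hyz_le : f y ≤ d := hfz ▸ hy hzs
  exact lt_irrefl _ (hsmall y hys z hzs (by linarith) (by linarith))

section UltraRadius

variable {ι X : Type*} [NormedAddCommGroup X]

/-- A limit along `𝒰` rather than a `limsup` along `atTop`: it exists for every bounded `u` and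
commutes with finite weighted sums. -/
noncomputable def ultraRadius (𝒰 : Ultrafilter ι) (u : ι → X) (w : X) : ℝ :=
  limUnder (𝒰 : Filter ι) fun i => ‖u i - w‖

variable {𝒰 : Ultrafilter ι} {u : ι → X}

theorem tendsto_norm_sub_ultraRadius (hu : Bornology.IsBounded (Set.range u)) (w : X) :
    Tendsto (fun i => ‖u i - w‖) 𝒰 (𝓝 (ultraRadius 𝒰 u w)) := by
  have hbdd : Bornology.IsBounded (Set.range fun i => ‖u i - w‖) := by
    obtain ⟨M, hM⟩ := hu.exists_norm_le
    refine (Metric.isBounded_Icc 0 (M + ‖w‖)).subset (Set.range_subset_iff.2 fun i => ?_)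
    exact ⟨norm_nonneg _, (norm_sub_le _ _).trans (by gcongr; exact hM _ ⟨i, rfl⟩)⟩
  obtain ⟨ℓ, -, hℓ⟩ := hbdd.isCompact_closure.ultrafilter_le_nhds' (𝒰.map fun i => ‖u i - w‖)
    (mem_of_superset (Ultrafilter.mem_map.2 (Eventually.of_forall Set.mem_range_self))
      subset_closure)
  exact tendsto_nhds_limUnder ⟨ℓ, hℓ⟩

theorem tendsto_norm_sub_ultraRadius_of_tendsto {v : ι → X}
    (hu : Bornology.IsBounded (Set.range u)) (huv : Tendsto (fun i => ‖v i - u i‖) 𝒰 (𝓝 0))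
    (w : X) : Tendsto (fun i => ‖v i - w‖) 𝒰 (𝓝 (ultraRadius 𝒰 u w)) := by
  refine (tendsto_norm_sub_ultraRadius hu w).congr_dist (squeeze_zero (fun _ => dist_nonneg)
    (fun i => ?_) huv)
  rw [Real.dist_eq, norm_sub_rev (v i) (u i)]
  simpa using abs_norm_sub_norm_le (u i - w) (v i - w)

theorem ultraRadius_nonneg (hu : Bornology.IsBounded (Set.range u)) (w : X) :
    0 ≤ ultraRadius 𝒰 u w :=
  ge_of_tendsto' (tendsto_norm_sub_ultraRadius hu w) fun _ => norm_nonneg _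

theorem lipschitzWith_ultraRadius (hu : Bornology.IsBounded (Set.range u)) :
    LipschitzWith 1 (ultraRadius 𝒰 u) :=
  LipschitzWith.of_le_add fun w v =>
    le_of_tendsto_of_tendsto' (tendsto_norm_sub_ultraRadius hu w)
      ((tendsto_norm_sub_ultraRadius hu v).add_const _) fun i => by
        rw [dist_eq_norm, ← norm_sub_rev v w]
        simpa using norm_sub_le_norm_sub_add_norm_sub (u i) v w

variable [NormedSpace ℝ X] [UniformConvexSpace X]

theorem exists_pos_forall_dist_lt_of_ultraRadius_lt (hu : Bornology.IsBounded (Set.range u))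
    {C : Set X} (hC : Convex ℝ C) {d : ℝ} (hd : ∀ w ∈ C, d ≤ ultraRadius 𝒰 u w)
    {ε : ℝ} (hε : 0 < ε) :
    ∃ η > 0, ∀ w ∈ C, ∀ v ∈ C, ultraRadius 𝒰 u w < d + η → ultraRadius 𝒰 u v < d + η →
      dist w v < ε := by
  obtain ⟨δ, hδ, huc⟩ := exists_forall_norm_le_add_le_two_mul_sub (E := X) hε (d + 1)
  set η := min 1 (δ / 4)
  have hη1 : η ≤ 1 := min_le_left _ _
  have hηδ : η ≤ δ / 4 := min_le_right _ _
  refine ⟨η, by positivity, fun w hw v hv hrw hrv => ?_⟩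
  by_contra! hwv
  have hmid : ∀ᶠ i in (𝒰 : Filter ι), ‖u i - midpoint ℝ w v‖ ≤ d + η - δ / 2 := by
    filter_upwards [(tendsto_norm_sub_ultraRadius hu w).eventually_lt_const hrw,
      (tendsto_norm_sub_ultraRadius hu v).eventually_lt_const hrv] with i hiw hiv
    have hsum := huc (d + η) (by linarith) hiw.le hiv.le
      (by rwa [sub_sub_sub_cancel_left, norm_sub_rev, ← dist_eq_norm])
    have htwice : (u i - w) + (u i - v) = (2 : ℝ) • (u i - midpoint ℝ w v) := by
      rw [midpoint_eq_smul_add, invOf_eq_inv]; module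
    rw [htwice, norm_smul, Real.norm_ofNat] at hsum
    linarith
  have hd_mid := (hd _ (hC.midpoint_mem hw hv)).trans
    (le_of_tendsto (tendsto_norm_sub_ultraRadius hu _) hmid)
  linarith

theorem existsUnique_isMinOn_ultraRadius [CompleteSpace X]
    (hu : Bornology.IsBounded (Set.range u)) {C : Set X} (hC_closed : IsClosed C)
    (hC_convex : Convex ℝ C) (hC : C.Nonempty) :
    ∃! z, z ∈ C ∧ IsMinOn (ultraRadius 𝒰 u) C z := by
  have hglb : IsGLB (ultraRadius 𝒰 u '' C) (sInf (ultraRadius 𝒰 u '' C)) :=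
    isGLB_csInf (hC.image _) ⟨0, by rintro _ ⟨w, -, rfl⟩; exact ultraRadius_nonneg hu w⟩
  exact existsUnique_isMinOn_of_forall_dist_lt hC_closed (lipschitzWith_ultraRadius hu).continuous
    hglb fun ε hε => exists_pos_forall_dist_lt_of_ultraRadius_lt hu hC_convex
      (fun w hw => hglb.1 ⟨w, hw, rfl⟩) hε

end UltraRadius

theorem sum_mul_ultraRadius_iterate_le {X : Type*} [NormedAddCommGroup X] {C : Set X}
    {T : X → X} (hT : Set.MapsTo T C C) {n₀ : ℕ} {α : Fin n₀ → ℝ}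
    (hne : ∀ x ∈ C, ∀ y ∈ C,
      ∑ j : Fin n₀, α j * ‖T^[(j : ℕ) + 1] x - T^[(j : ℕ) + 1] y‖ ≤ ‖x - y‖)
    {x : X} (hx : x ∈ C) (hbdd : Bornology.IsBounded (Set.range fun n => T^[n] x))
    (har : Tendsto (fun n => ‖T^[n] x - T^[n + 1] x‖) atTop (𝓝 0))
    {𝒰 : Ultrafilter ℕ} (h𝒰 : (𝒰 : Filter ℕ) ≤ atTop) {w : X} (hw : w ∈ C) :
    ∑ j : Fin n₀, α j * ultraRadius 𝒰 (fun n => T^[n] x) (T^[(j : ℕ) + 1] w) ≤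
      ultraRadius 𝒰 (fun n => T^[n] x) w := by
  have hshift (j : Fin n₀) : Tendsto (fun n => ‖T^[(j : ℕ) + 1] (T^[n] x) - T^[(j : ℕ) + 1] w‖)
      𝒰 (𝓝 (ultraRadius 𝒰 (fun n => T^[n] x) (T^[(j : ℕ) + 1] w))) := by
    refine tendsto_norm_sub_ultraRadius_of_tendsto hbdd ?_ _
    refine ((tendsto_norm_add_sub_of_tendsto_norm_sub_succ har ((j : ℕ) + 1)).mono_left
      h𝒰).congr fun n => ?_
    rw [← Function.iterate_add_apply, add_comm]
  exact le_of_tendsto_of_tendsto' (tendsto_finsetSum _ fun j _ => (hshift j).const_mul (α j))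
    (tendsto_norm_sub_ultraRadius hbdd w) fun n => hne _ (hT.iterate n hx) w hw

theorem unique_minimizer_of_phi
    {X : Type*} [NormedAddCommGroup X] [NormedSpace ℝ X] [CompleteSpace X]
    [UniformConvexSpace X]
    (C : Set X) (hC_closed : IsClosed C) (hC_convex : Convex ℝ C)
    (T : X → X) (hT : Set.MapsTo T C C)
    (n₀ : ℕ) (hn₀ : 0 < n₀) (α : Fin n₀ → ℝ)
    (hα_nonneg : ∀ j, 0 ≤ α j)
    (hα_first : 0 < α ⟨0, hn₀⟩)
    (hα_sum : ∑ j, α j = 1)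
    (hne : ∀ x ∈ C, ∀ y ∈ C,
      ∑ j : Fin n₀, α j * ‖T^[(j : ℕ) + 1] x - T^[(j : ℕ) + 1] y‖ ≤ ‖x - y‖)
    (hF : ∃ z ∈ C, T z = z)
    (x : X) (hx : x ∈ C)
    (har : Filter.Tendsto (fun n => ‖T^[n] x - T^[n + 1] x‖) Filter.atTop (nhds 0))
    (φ : X → ℝ)
    (hφ : ∀ y ∈ C, T y = y →
      Filter.Tendsto (fun n => ‖T^[n] x - y‖) Filter.atTop (nhds (φ y))) :
    ∃! y₀ : X, y₀ ∈ C ∧ T y₀ = y₀ ∧ ∀ y ∈ C, T y = y → φ y₀ ≤ φ y := by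
  obtain ⟨z, hzC, hTz⟩ := hF
  have hbdd : Bornology.IsBounded (Set.range fun n => T^[n] x) := by
    obtain ⟨M, hM⟩ := (hφ z hzC hTz).bddAbove_range
    refine (Metric.isBounded_closedBall (x := z) (r := M)).subset (Set.range_subset_iff.2 ?_)
    exact fun n => by simpa [dist_eq_norm] using hM ⟨n, rfl⟩
  obtain ⟨𝒰, h𝒰⟩ := Ultrafilter.exists_le (atTop : Filter ℕ)
  obtain ⟨z₀, ⟨hz₀C, hz₀min⟩, hz₀_unique⟩ :=
    existsUnique_isMinOn_ultraRadius (𝒰 := 𝒰) hbdd hC_closed hC_convex ⟨z, hzC⟩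
  set r := ultraRadius 𝒰 fun n => T^[n] x
  have hrφ : ∀ y ∈ C, T y = y → r y = φ y := fun y hy hTy =>
    tendsto_nhds_unique (tendsto_norm_sub_ultraRadius hbdd y) ((hφ y hy hTy).mono_left h𝒰)
  have hTz₀ : T z₀ = z₀ := by
    refine hz₀_unique _ ⟨hT hz₀C, isMinOn_iff.2 fun w hw => le_trans ?_ (hz₀min hw)⟩
    have hmean := sum_mul_ultraRadius_iterate_le hT hne hx hbdd har h𝒰 hz₀C
    exact le_of_sum_mul_le_of_forall_le_s8 hα_nonneg hα_sum
      (fun j => hz₀min (hT.iterate _ hz₀C)) hmean hα_first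
  refine ⟨z₀, ⟨hz₀C, hTz₀, fun y hy hTy => ?_⟩, fun y ⟨hy, hTy, hymin⟩ => ?_⟩
  · rw [← hrφ z₀ hz₀C hTz₀, ← hrφ y hy hTy]
    exact hz₀min hy
  · refine hz₀_unique y ⟨hy, isMinOn_iff.2 fun w hw => le_trans ?_ (hz₀min hw)⟩
    rw [hrφ y hy hTy, hrφ z₀ hz₀C hTz₀]
    exact hymin z₀ hz₀C hTz₀
end

section
/- Let ℓ² be the Hilbert space of square-summable real sequences with its usual norm ‖·‖₂, and let B denote its closed unit ball. Define τ : [−1,1] → [−1,1] by τ(t) = √2·t + (√2 − 1) for −1 ≤ t ≤ −(√2 − 1)/√2, τ(t) = 0 for −(√2 − 1)/√2 ≤ t ≤ (√2 − 1)/√2, and τ(t) = √2·t − (√2 − 1) for (√2 − 1)/√2 ≤ t ≤ 1, and define T(x₁, x₂, x₃, x₄, …) = (τ(x₂), √(2/3)·x₃, x₄, x₅, …). Then T maps B into B, and for all x, y ∈ B, (1/2)‖Tx − Ty‖₂² + (1/2)‖T²x − T²y‖₂² ≤ ‖x − y‖₂²; that is, T is ((1/2,1/2), 2)-nonexpansive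 on B. -/
open Real

/-- The piecewise map `τ : [-1,1] → [-1,1]` of Goebel and Sims. -/
noncomputable def tau (t : ℝ) : ℝ :=
  if t ≤ -((Real.sqrt 2 - 1) / Real.sqrt 2) then Real.sqrt 2 * t + (Real.sqrt 2 - 1)
  else if t ≤ (Real.sqrt 2 - 1) / Real.sqrt 2 then 0
  else Real.sqrt 2 * t - (Real.sqrt 2 - 1)

noncomputable def gsc : ℝ := (Real.sqrt 2 - 1) / Real.sqrt 2


lemma sqrt2_facts : Real.sqrt 2 ^ 2 = 2 ∧ 1 < Real.sqrt 2 := by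
  have h : Real.sqrt 2 ^ 2 = 2 := Real.sq_sqrt (by norm_num)
  refine ⟨h, ?_⟩
  nlinarith [Real.sqrt_nonneg 2]


lemma gsc_facts : gsc * Real.sqrt 2 = Real.sqrt 2 - 1 ∧ 0 < gsc ∧ gsc < 1 := by
  obtain ⟨hr2, hr1⟩ := sqrt2_facts
  have hrpos : (0:ℝ) < Real.sqrt 2 := by linarith
  refine ⟨div_mul_cancel₀ _ (ne_of_gt hrpos), div_pos (by linarith) hrpos, ?_⟩
  rw [gsc, div_lt_one hrpos]; linarith


lemma tau_cases (t : ℝ) :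
    (t ≤ -gsc ∧ tau t = Real.sqrt 2 * t + (Real.sqrt 2 - 1)) ∨
    (-gsc < t ∧ t ≤ gsc ∧ tau t = 0) ∨
    (gsc < t ∧ tau t = Real.sqrt 2 * t - (Real.sqrt 2 - 1)) := by
  unfold tau gsc
  split_ifs with h1 h2
  · exact Or.inl ⟨h1, rfl⟩
  · exact Or.inr (Or.inl ⟨lt_of_not_ge h1, h2, rfl⟩)
  · exact Or.inr (Or.inr ⟨lt_of_not_ge h2, rfl⟩)


lemma tau_sq_le {t : ℝ} (h : t ^ 2 ≤ 1) : tau t ^ 2 ≤ t ^ 2 := by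
  obtain ⟨hr2, hr1⟩ := sqrt2_facts
  obtain ⟨hcr, hc0, hc1⟩ := gsc_facts
  have ht1 : -1 ≤ t := by nlinarith
  have ht2 : t ≤ 1 := by nlinarith
  rcases tau_cases t with ⟨h1, he⟩ | ⟨h1, h2, he⟩ | ⟨h1, he⟩ <;> rw [he]
  · nlinarith [mul_nonneg (by linarith : (0:ℝ) ≤ t + 1)
      (by nlinarith : (0:ℝ) ≤ -((Real.sqrt 2 + 1) * t + (Real.sqrt 2 - 1)))]
  · nlinarith [sq_nonneg t]
  · nlinarith [mul_nonneg (by linarith : (0:ℝ) ≤ 1 - t)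
      (by nlinarith : (0:ℝ) ≤ (Real.sqrt 2 + 1) * t - (Real.sqrt 2 - 1))]


lemma tau_lip (s t : ℝ) : (tau s - tau t) ^ 2 ≤ 2 * (s - t) ^ 2 := by
  obtain ⟨hr2, hr1⟩ := sqrt2_facts
  obtain ⟨hcr, hc0, hc1⟩ := gsc_facts
  rcases tau_cases s with ⟨hs1, hes⟩ | ⟨hs1, hs2, hes⟩ | ⟨hs1, hes⟩ <;>
    rcases tau_cases t with ⟨ht1, het⟩ | ⟨ht1, ht2, het⟩ | ⟨ht1, het⟩ <;>
    rw [hes, het]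
  · nlinarith [sq_nonneg (s - t)]
  · have e : Real.sqrt 2 * s + (Real.sqrt 2 - 1) - 0 = Real.sqrt 2 * (s + gsc) := by
      linear_combination -hcr
    rw [e, mul_pow, hr2]
    nlinarith [mul_nonneg (by linarith : (0:ℝ) ≤ t + gsc) (by linarith : (0:ℝ) ≤ t - 2*s - gsc)]
  · have e : Real.sqrt 2 * s + (Real.sqrt 2 - 1) - (Real.sqrt 2 * t - (Real.sqrt 2 - 1))
        = Real.sqrt 2 * (s - t + 2 * gsc) := by linear_combination (-2 : ℝ) * hcr
    rw [e, mul_pow, hr2]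
    nlinarith [mul_nonneg hc0.le (by linarith : (0:ℝ) ≤ t - s - 2*gsc)]
  · have e : 0 - (Real.sqrt 2 * t + (Real.sqrt 2 - 1)) = Real.sqrt 2 * (-(t + gsc)) := by
      linear_combination hcr
    rw [e, mul_pow, hr2]
    nlinarith [mul_nonneg (by linarith : (0:ℝ) ≤ s + gsc) (by linarith : (0:ℝ) ≤ s - 2*t - gsc)]
  · nlinarith [sq_nonneg (s - t)]
  · have e : 0 - (Real.sqrt 2 * t - (Real.sqrt 2 - 1)) = Real.sqrt 2 * (-(t - gsc)) := by
      linear_combination -hcr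
    rw [e, mul_pow, hr2]
    nlinarith [mul_nonneg (by linarith : (0:ℝ) ≤ gsc - s) (by linarith : (0:ℝ) ≤ 2*t - s - gsc)]
  · have e : Real.sqrt 2 * s - (Real.sqrt 2 - 1) - (Real.sqrt 2 * t + (Real.sqrt 2 - 1))
        = Real.sqrt 2 * (s - t - 2 * gsc) := by linear_combination (2:ℝ) * hcr
    rw [e, mul_pow, hr2]
    nlinarith [mul_nonneg hc0.le (by linarith : (0:ℝ) ≤ s - t - 2*gsc)]
  · have e : Real.sqrt 2 * s - (Real.sqrt 2 - 1) - 0 = Real.sqrt 2 * (s - gsc) := by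
      linear_combination hcr
    rw [e, mul_pow, hr2]
    nlinarith [mul_nonneg (by linarith : (0:ℝ) ≤ gsc - t) (by linarith : (0:ℝ) ≤ 2*s - t - gsc)]
  · nlinarith [sq_nonneg (s - t)]

/-- The map `T(x₁, x₂, x₃, x₄, …) = (τ(x₂), √(2/3)·x₃, x₄, x₅, …)` on real sequences
(0-indexed: `x j` is the `(j+1)`-st coordinate). -/
noncomputable def Tseq (x : ℕ → ℝ) : ℕ → ℝ
  | 0 => tau (x 1)
  | 1 => Real.sqrt (2 / 3) * x 2
  | n + 2 => x (n + 3)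

lemma tsum_split1 (f : ℕ → ℝ) (hf : Summable f) : ∑' j, f j = f 0 + ∑' n, f (n + 1) :=
  Summable.tsum_eq_zero_add hf


lemma tsum_split2 (f : ℕ → ℝ) (hf : Summable f) :
    ∑' j, f j = f 0 + f 1 + ∑' n, f (n + 2) := by
  rw [Summable.tsum_eq_zero_add hf, Summable.tsum_eq_zero_add ((summable_nat_add_iff 1).2 hf), ← add_assoc]


lemma tsum_split3 (f : ℕ → ℝ) (hf : Summable f) :
    ∑' j, f j = f 0 + f 1 + f 2 + ∑' n, f (n + 3) := by
  rw [tsum_split2 f hf, Summable.tsum_eq_zero_add ((summable_nat_add_iff 2).2 hf), ← add_assoc]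


lemma memℓp_iff_sq (f : ℕ → ℝ) : Memℓp f 2 ↔ Summable fun j => (f j) ^ 2 := by
  have hkey : ∀ a : ℝ, ‖a‖ ^ (ENNReal.toReal 2) = a ^ 2 := fun a => by
    rw [show (ENNReal.toReal 2) = ((2:ℕ):ℝ) by norm_num, Real.rpow_natCast,
      Real.norm_eq_abs, sq_abs]
  rw [memℓp_gen_iff (p := 2) (by norm_num)]
  constructor
  · exact fun h => h.congr fun j => hkey _
  · exact fun h => h.congr fun j => (hkey _).symm


lemma sqrt23_sq : Real.sqrt (2/3) ^ 2 = 2/3 := Real.sq_sqrt (by norm_num)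

/-- `T` maps the closed unit ball `B` of `ℓ²` into itself (membership in `B` is expressed
as being square-summable with `∑' j, (x j)² ≤ 1`, and `‖z‖₂² = ∑' j, (z j)²`), and `T` is
`((1/2, 1/2), 2)`-nonexpansive on `B`:
`(1/2)‖Tx - Ty‖₂² + (1/2)‖T²x - T²y‖₂² ≤ ‖x - y‖₂²` for all `x, y ∈ B`. -/
theorem Tseq_maps_ball_to_ball_and_half_half_two_nonexpansive
    (x y : ℕ → ℝ)
    (hx : Memℓp x 2) (hx1 : ∑' j, (x j) ^ 2 ≤ 1)
    (hy : Memℓp y 2) (hy1 : ∑' j, (y j) ^ 2 ≤ 1) :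
    Memℓp (Tseq x) 2 ∧ (∑' j, (Tseq x j) ^ 2 ≤ 1) ∧
    (1 / 2) * (∑' j, (Tseq x j - Tseq y j) ^ 2) +
      (1 / 2) * (∑' j, (Tseq (Tseq x) j - Tseq (Tseq y) j) ^ 2) ≤
    ∑' j, (x j - y j) ^ 2 := by
  have hsx : Summable fun j => (x j) ^ 2 := (memℓp_iff_sq x).1 hx
  have hsy : Summable fun j => (y j) ^ 2 := (memℓp_iff_sq y).1 hy
  have hd : Summable fun j => (x j - y j) ^ 2 := by
    simpa using (memℓp_iff_sq (x - y)).1 (hx.sub hy)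
  -- summability of Tseq x squares
  have hTx : Summable fun j => (Tseq x j) ^ 2 := by
    refine (summable_nat_add_iff 2).1 ?_
    simpa [Tseq] using (summable_nat_add_iff 3).2 hsx
  have memb : Memℓp (Tseq x) 2 := (memℓp_iff_sq _).2 hTx
  -- coordinate bounds
  have hx1sq : (x 1) ^ 2 ≤ 1 := le_trans (Summable.le_tsum hsx 1 fun j _ => sq_nonneg _) hx1
  -- sum bound
  have hball : ∑' j, (Tseq x j) ^ 2 ≤ 1 := by
    have e1 : ∑' j, (Tseq x j) ^ 2
        = tau (x 1) ^ 2 + (Real.sqrt (2/3) * x 2) ^ 2 + ∑' n, (x (n + 3)) ^ 2 := by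
      rw [tsum_split2 _ hTx]
      congr 1
    have e2 : ∑' j, (x j) ^ 2
        = (x 0) ^ 2 + (x 1) ^ 2 + (x 2) ^ 2 + ∑' n, (x (n + 3)) ^ 2 := tsum_split3 _ hsx
    have h1 : tau (x 1) ^ 2 ≤ (x 1) ^ 2 := tau_sq_le hx1sq
    have h2 : (Real.sqrt (2/3) * x 2) ^ 2 = 2/3 * (x 2) ^ 2 := by
      rw [mul_pow, sqrt23_sq]
    rw [e1] at *
    rw [e2] at hx1
    nlinarith [sq_nonneg (x 0), sq_nonneg (x 2)]
  refine ⟨memb, hball, ?_⟩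
  -- nonexpansiveness
  set d : ℕ → ℝ := fun j => (x j - y j) ^ 2 with hddef
  have hd3 : Summable fun n => d (n + 3) := (summable_nat_add_iff 3).2 hd
  have hd4 : Summable fun n => d (n + 4) := (summable_nat_add_iff 4).2 hd
  have hu : Summable fun j => (Tseq x j - Tseq y j) ^ 2 := by
    refine (summable_nat_add_iff 2).1 ?_
    simpa [Tseq, hddef] using hd3
  have hv : Summable fun j => (Tseq (Tseq x) j - Tseq (Tseq y) j) ^ 2 := by
    refine (summable_nat_add_iff 2).1 ?_
    simpa [Tseq, hddef] using hd4
  have eu : ∑' j, (Tseq x j - Tseq y j) ^ 2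
      = (tau (x 1) - tau (y 1)) ^ 2
        + (Real.sqrt (2/3) * x 2 - Real.sqrt (2/3) * y 2) ^ 2 + ∑' n, d (n + 3) := by
    rw [tsum_split2 _ hu]
    congr 1
  have ev : ∑' j, (Tseq (Tseq x) j - Tseq (Tseq y) j) ^ 2
      = (tau (Real.sqrt (2/3) * x 2) - tau (Real.sqrt (2/3) * y 2)) ^ 2
        + (Real.sqrt (2/3) * x 3 - Real.sqrt (2/3) * y 3) ^ 2 + ∑' n, d (n + 4) := by
    rw [tsum_split2 _ hv]
    congr 1
  have eD : ∑' j, d j = d 0 + d 1 + d 2 + ∑' n, d (n + 3) := tsum_split3 _ hd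
  have eA : ∑' n, d (n + 3) = d 3 + ∑' n, d (n + 4) := by
    rw [Summable.tsum_eq_zero_add hd3]
  -- pointwise bounds
  have bu0 : (tau (x 1) - tau (y 1)) ^ 2 ≤ 2 * d 1 := tau_lip _ _
  have bu1 : (Real.sqrt (2/3) * x 2 - Real.sqrt (2/3) * y 2) ^ 2 = 2/3 * d 2 := by
    rw [hddef, ← mul_sub, mul_pow, sqrt23_sq]
  have bv0 : (tau (Real.sqrt (2/3) * x 2) - tau (Real.sqrt (2/3) * y 2)) ^ 2
      ≤ 4/3 * d 2 := by
    have := tau_lip (Real.sqrt (2/3) * x 2) (Real.sqrt (2/3) * y 2)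
    have h2 : (Real.sqrt (2/3) * x 2 - Real.sqrt (2/3) * y 2) ^ 2 = 2/3 * d 2 := bu1
    linarith
  have bv1 : (Real.sqrt (2/3) * x 3 - Real.sqrt (2/3) * y 3) ^ 2 = 2/3 * d 3 := by
    rw [hddef, ← mul_sub, mul_pow, sqrt23_sq]
  have hd0 : 0 ≤ d 0 := sq_nonneg _
  have hd3' : 0 ≤ d 3 := sq_nonneg _
  rw [eu, ev, eD]
  rw [eA]
  linarith
end
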